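/- Let N > 1 be a natural number, let a < b be real numbers, and let x : Fin N → ℝ satisfy a ≤ x j ≤ b for all j, with mean μ = (1/N)·∑_{j} x j. Model a sample of size m drawn without replacement by choosing a permutation σ of Fin N uniformly at random and forming the sample mean X̄_m = (1/m)·∑_{t=0}^{m-1} x (σ t). Fix ε ∈ (0,1) and δ ∈ (0,1), and set u = (log(1/δ)/2)·(b − a)²/ε². Then for every natural number m with 1 ≤ m ≤ N and m ≥ min{(u + 1)/(1 + u/N), (u + u/N)/(1 + u/N)}, the probability of the event X̄_m − μ ≥ −ε is at least 1 − δ. -/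

import Mathlib

/-!
Serfling's argument. Let `T_k` be the sum of the first `k` draws and `μ` the population mean.
Given the first `k` draws, the next one is uniform over the remaining `N - k` values, so
`M_k = (T_k - k μ) / (N - k)` is a martingale whose increments are controlled by Hoeffding's
lemma; the accumulated variance proxies add up to at most `k (N - k + 1) / ((N - k) ^ 2 N)`.
A Chernoff bound turns this into `P(T_k - k μ ≤ -s) ≤ exp (-2 N s² / ((b - a)² k (N - k + 1)))`,
and the same bound for the complementary sample of size `N - k` gives the denominator
`(N - k) (k + 1)` instead. With `s = m ε`, each branch of the minimum in the sample-size
condition makes one of these two bounds at most `δ`.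
-/

open Real Finset Equiv ProbabilityTheory MeasureTheory
open scoped Nat

theorem Fintype.sum_exp_mul_le_of_mem_Icc {ι : Type*} [Fintype ι] [Nonempty ι] (y : ι → ℝ)
    {a b : ℝ} (hy : ∀ i, y i ∈ Set.Icc a b) (t : ℝ) :
    ∑ i, exp (t * y i) ≤
      Fintype.card ι * exp (t * ((∑ i, y i) / Fintype.card ι) + t ^ 2 * (b - a) ^ 2 / 8) := by
  let _ : MeasurableSpace ι := ⊤
  have : DiscreteMeasurableSpace ι := ⟨fun _ => trivial⟩
  set μ := (PMF.uniformOfFintype ι).toMeasure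
  have hint : ∀ f : ι → ℝ, ∫ i, f i ∂μ = (∑ i, f i) / Fintype.card ι := by
    intro f
    simp [μ, PMF.integral_eq_sum, div_eq_inv_mul, Finset.mul_sum]
  have h := (hasSubgaussianMGF_of_mem_Icc (μ := μ) (X := y) Measurable.of_discrete.aemeasurable
    (ae_of_all _ hy)).mgf_le t
  have hcard : (0 : ℝ) < Fintype.card ι := by exact_mod_cast Fintype.card_pos
  simp only [mgf, hint, mul_sub, exp_sub, ← Finset.sum_div] at h
  rw [div_div, div_le_iff₀ (by positivity)] at h
  refine h.trans_eq ?_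
  have hsq : (((‖b - a‖₊ / 2) ^ 2 : NNReal) : ℝ) = (b - a) ^ 2 / 4 := by
    simp [div_pow, sq_abs]; norm_num
  rw [hsq, exp_add]
  ring_nf

theorem Finset.sum_exp_mul_le_of_mem_Icc {ι : Type*} (s : Finset ι) (y : ι → ℝ) {a b : ℝ}
    (hy : ∀ i ∈ s, y i ∈ Set.Icc a b) (t : ℝ) :
    ∑ i ∈ s, exp (t * y i) ≤ #s * exp (t * ((∑ i ∈ s, y i) / #s) + t ^ 2 * (b - a) ^ 2 / 8) := by
  rcases s.eq_empty_or_nonempty with rfl | hs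
  · simp
  have : Nonempty s := hs.to_subtype
  simpa only [univ_eq_attach, sum_attach s fun i => exp (t * y i), sum_attach,
    Fintype.card_coe] using
    Fintype.sum_exp_mul_le_of_mem_Icc (fun i : s => y i) (fun i => hy i i.2) t

theorem Finset.card_filter_le_mul_exp_le_sum {α : Type*} (s : Finset α) (Y : α → ℝ) {l t : ℝ}
    (hl : 0 ≤ l) : #{a ∈ s | t ≤ Y a} * exp (l * t) ≤ ∑ a ∈ s, exp (l * Y a) :=
  calc (#{a ∈ s | t ≤ Y a} : ℝ) * exp (l * t) = ∑ a ∈ s with t ≤ Y a, exp (l * t) := by simp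
    _ ≤ ∑ a ∈ s with t ≤ Y a, exp (l * Y a) :=
      sum_le_sum fun a ha => exp_le_exp.2 (mul_le_mul_of_nonneg_left (mem_filter.1 ha).2 hl)
    _ ≤ ∑ a ∈ s, exp (l * Y a) :=
      sum_le_sum_of_subset_of_nonneg (filter_subset _ _) fun _ _ _ => (exp_pos _).le

theorem one_sub_le_card_subtype_div {α : Type*} [Fintype α] [Nonempty α] (P : α → Prop)
    [DecidablePred P] {δ : ℝ} (h : (#{a | ¬P a} : ℝ) ≤ Fintype.card α * δ) :
    1 - δ ≤ Nat.card {a // P a} / Nat.card α := by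
  have hsplit := card_filter_add_card_filter_not (s := univ) fun a => P a
  rw [card_univ] at hsplit
  rw [Nat.card_eq_fintype_card, Nat.card_eq_fintype_card, Fintype.card_subtype,
    le_div_iff₀ (by exact_mod_cast Fintype.card_pos), ← hsplit]
  rw [← hsplit] at h
  push_cast at h ⊢
  linarith

section Sampling
variable {N : ℕ} (x : Fin N → ℝ)

noncomputable def prefixSum (σ : Perm (Fin N)) (k : ℕ) : ℝ :=
  ∑ t ∈ univ.filter (fun t : Fin N => (t : ℕ) < k), x (σ t)

theorem prefixSum_zero (σ : Perm (Fin N)) : prefixSum x σ 0 = 0 := by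
  simp [prefixSum]

theorem prefixSum_succ (σ : Perm (Fin N)) {k : ℕ} (hk : k < N) :
    prefixSum x σ (k + 1) = prefixSum x σ k + x (σ ⟨k, hk⟩) := by
  have : univ.filter (fun t : Fin N => (t : ℕ) < k + 1) =
      insert ⟨k, hk⟩ (univ.filter (fun t : Fin N => (t : ℕ) < k)) := by
    ext t; simp [Fin.ext_iff]; omega
  rw [prefixSum, this, sum_insert (by simp), add_comm, prefixSum]

theorem prefixSum_self (σ : Perm (Fin N)) : prefixSum x σ N = ∑ j, x j := by
  rw [prefixSum, filter_true_of_mem fun t _ => t.isLt]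
  exact Equiv.sum_comp σ x

theorem sum_filter_le_eq_sub_prefixSum (σ : Perm (Fin N)) (k : ℕ) :
    ∑ t ∈ univ.filter (fun t : Fin N => k ≤ (t : ℕ)), x (σ t) = ∑ j, x j - prefixSum x σ k := by
  rw [prefixSum, ← Equiv.sum_comp σ x,
    ← sum_filter_add_sum_filter_not univ fun t : Fin N => (t : ℕ) < k]
  simp only [not_lt, add_sub_cancel_left]

theorem Fin.card_filter_le_val {k : ℕ} (hk : k ≤ N) : #{t : Fin N | k ≤ (t : ℕ)} = N - k := by
  have := card_filter_add_card_filter_not (s := univ) fun t : Fin N => (t : ℕ) < k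
  simp only [not_lt, Fin.card_filter_val_lt, card_univ, Fintype.card_fin, min_eq_right hk] at this
  omega

theorem prefixSum_neg (σ : Perm (Fin N)) (k : ℕ) : prefixSum (-x) σ k = -prefixSum x σ k := by
  simp [prefixSum]

theorem prefixSum_mul_revPerm (σ : Perm (Fin N)) {k : ℕ} (hk : k ≤ N) :
    prefixSum x (σ * Fin.revPerm) (N - k) = ∑ j, x j - prefixSum x σ k := by
  rw [← sum_filter_le_eq_sub_prefixSum, prefixSum]
  refine sum_nbij' Fin.rev Fin.rev (fun t ht => ?_) (fun t ht => ?_) (fun t _ => Fin.rev_rev t)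
    (fun t _ => Fin.rev_rev t) (fun t _ => rfl)
  · simp only [mem_filter, mem_univ, true_and, Fin.val_rev] at ht ⊢; omega
  · simp only [mem_filter, mem_univ, true_and, Fin.val_rev] at ht ⊢; omega

theorem prefixSum_mul_swap (σ : Perm (Fin N)) {k : ℕ} (hk : k < N) {j : Fin N} (hj : k ≤ j) :
    prefixSum x (σ * swap ⟨k, hk⟩ j) k = prefixSum x σ k := by
  refine sum_congr rfl fun t ht => ?_
  have ht : (t : ℕ) < k := (mem_filter.1 ht).2
  rw [Perm.mul_apply, swap_apply_of_ne_of_ne (by grind [Fin.ext_iff]) (by grind [Fin.ext_iff])]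

theorem sum_comp_prefixSum_mul_apply (f : ℝ → ℝ) (g : Fin N → ℝ) {k : ℕ} (hk : k < N) {j : Fin N}
    (hj : k ≤ j) :
    ∑ σ, f (prefixSum x σ k) * g (σ j) = ∑ σ, f (prefixSum x σ k) * g (σ ⟨k, hk⟩) := by
  rw [← Equiv.sum_comp (Equiv.mulRight (swap ⟨k, hk⟩ j))]
  simp only [coe_mulRight, prefixSum_mul_swap x _ hk hj, Perm.mul_apply, swap_apply_right]

theorem card_mul_sum_comp_prefixSum_mul_apply (f : ℝ → ℝ) (g : Fin N → ℝ) {k : ℕ} (hk : k < N) :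
    (N - k : ℝ) * ∑ σ, f (prefixSum x σ k) * g (σ ⟨k, hk⟩) =
      ∑ σ, f (prefixSum x σ k) * ∑ j ∈ univ.filter (fun j : Fin N => k ≤ (j : ℕ)), g (σ j) := by
  simp only [mul_sum (univ.filter fun j : Fin N => k ≤ (j : ℕ))]
  rw [sum_comm,
    sum_congr rfl fun j hj => sum_comp_prefixSum_mul_apply x f g hk (mem_filter.1 hj).2, sum_const,
    Fin.card_filter_le_val hk.le, nsmul_eq_mul, Nat.cast_sub hk.le]

noncomputable def serflingMartingale (σ : Perm (Fin N)) (k : ℕ) : ℝ :=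
  (prefixSum x σ k - k * (∑ j, x j) / N) / (N - k)

theorem serflingMartingale_zero (σ : Perm (Fin N)) : serflingMartingale x σ 0 = 0 := by
  simp [serflingMartingale, prefixSum_zero]

theorem serflingMartingale_succ (σ : Perm (Fin N)) {k : ℕ} (hk : k + 1 < N) :
    serflingMartingale x σ (k + 1) = serflingMartingale x σ k +
      (x (σ ⟨k, by omega⟩) - (∑ j, x j - prefixSum x σ k) / (N - k)) / (N - k - 1) := by
  have hk' : (k + 1 : ℝ) < N := by exact_mod_cast hk
  have hN : (N : ℝ) ≠ 0 := by linarith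
  have hNk : (N - k : ℝ) ≠ 0 := by linarith
  have hNk1 : (N - k - 1 : ℝ) ≠ 0 := by linarith
  have hNk1' : (N - (k + 1) : ℝ) ≠ 0 := by linarith
  rw [serflingMartingale, serflingMartingale, prefixSum_succ x σ (by omega)]
  push_cast
  field_simp
  ring

-- The next draw is uniform over the `N - k` values not yet drawn, whose mean is
-- `(∑ j, x j - T_k) / (N - k)`: Hoeffding's lemma applies to it.
theorem sum_exp_serflingMartingale_succ_le {a b : ℝ} (hx : ∀ j, x j ∈ Set.Icc a b) {k : ℕ}
    (hk : k + 1 < N) (θ : ℝ) :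
    ∑ σ, exp (θ * serflingMartingale x σ (k + 1)) ≤
      exp ((θ / (N - k - 1)) ^ 2 * (b - a) ^ 2 / 8) * ∑ σ, exp (θ * serflingMartingale x σ k) := by
  have hkN : k < N := by omega
  have hn : (0 : ℝ) < N - k := by
    have : (k : ℝ) < N := by exact_mod_cast hkN
    linarith
  set c := θ / (N - k - 1)
  let f : ℝ → ℝ := fun T =>
    exp (θ * ((T - k * (∑ j, x j) / N) / (N - k)) - c * ((∑ j, x j - T) / (N - k)))
  have hsplit : ∀ σ, exp (θ * serflingMartingale x σ (k + 1)) =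
      f (prefixSum x σ k) * exp (c * x (σ ⟨k, hkN⟩)) := by
    intro σ
    rw [serflingMartingale_succ x σ hk, ← exp_add]
    congr 1
    simp only [serflingMartingale]
    ring
  have hhoeff : ∀ σ, ∑ j ∈ univ.filter (fun j : Fin N => k ≤ (j : ℕ)), exp (c * x (σ j)) ≤
      (N - k) * exp (c * ((∑ j, x j - prefixSum x σ k) / (N - k)) + c ^ 2 * (b - a) ^ 2 / 8) := by
    intro σ
    have := Finset.sum_exp_mul_le_of_mem_Icc (univ.filter fun j : Fin N => k ≤ (j : ℕ))
      (fun j => x (σ j)) (fun j _ => hx (σ j)) c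
    rwa [sum_filter_le_eq_sub_prefixSum, Fin.card_filter_le_val hkN.le, Nat.cast_sub hkN.le] at this
  have hrecombine : ∀ σ, f (prefixSum x σ k) *
      exp (c * ((∑ j, x j - prefixSum x σ k) / (N - k)) + c ^ 2 * (b - a) ^ 2 / 8) =
      exp (c ^ 2 * (b - a) ^ 2 / 8) * exp (θ * serflingMartingale x σ k) := by
    intro σ
    simp only [f, serflingMartingale, ← exp_add]
    ring_nf
  refine le_of_mul_le_mul_left ?_ hn
  calc (N - k : ℝ) * ∑ σ, exp (θ * serflingMartingale x σ (k + 1))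
      = ∑ σ, f (prefixSum x σ k) *
          ∑ j ∈ univ.filter (fun j : Fin N => k ≤ (j : ℕ)), exp (c * x (σ j)) := by
        simp only [hsplit]
        exact card_mul_sum_comp_prefixSum_mul_apply x f (fun j => exp (c * x j)) hkN
    _ ≤ ∑ σ, f (prefixSum x σ k) *
          ((N - k) *
            exp (c * ((∑ j, x j - prefixSum x σ k) / (N - k)) + c ^ 2 * (b - a) ^ 2 / 8)) :=
        sum_le_sum fun σ _ => mul_le_mul_of_nonneg_left (hhoeff σ) (exp_pos _).le
    _ = (N - k) * (exp (c ^ 2 * (b - a) ^ 2 / 8) * ∑ σ, exp (θ * serflingMartingale x σ k)) := by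
        simp only [mul_left_comm _ (N - k : ℝ), hrecombine, ← mul_sum]

theorem serfling_bound_add_inv_sq_le {n k : ℝ} (hk : 0 ≤ k) (hkn : k + 1 < n) :
    k * (n - k + 1) / ((n - k) ^ 2 * n) + 1 / (n - k - 1) ^ 2 ≤
      (k + 1) * (n - (k + 1) + 1) / ((n - (k + 1)) ^ 2 * n) := by
  have hnk1 : 0 < n - k - 1 := by linarith
  have hnk1' : n - (k + 1) ≠ 0 := by linarith
  have hnk : 0 < n - k := by linarith
  have hn : 0 < n := by linarith
  have hdiff : (k + 1) * (n - (k + 1) + 1) / ((n - (k + 1)) ^ 2 * n) -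
      (k * (n - k + 1) / ((n - k) ^ 2 * n) + 1 / (n - k - 1) ^ 2) =
      k / ((n - k - 1) * (n - k) ^ 2 * n) := by
    field_simp
    ring
  have : 0 ≤ k / ((n - k - 1) * (n - k) ^ 2 * n) := by positivity
  linarith

theorem sum_exp_serflingMartingale_le {a b : ℝ} (hx : ∀ j, x j ∈ Set.Icc a b) {k : ℕ}
    (hk : k < N) (θ : ℝ) :
    ∑ σ, exp (θ * serflingMartingale x σ k) ≤
      N ! * exp (θ ^ 2 * (b - a) ^ 2 / 8 * (k * (N - k + 1) / ((N - k) ^ 2 * N))) := by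
  induction k with
  | zero => simp [serflingMartingale_zero, Fintype.card_perm]
  | succ k ih =>
    have hk' : (k + 1 : ℝ) < N := by exact_mod_cast hk
    calc ∑ σ, exp (θ * serflingMartingale x σ (k + 1))
        ≤ exp ((θ / (N - k - 1)) ^ 2 * (b - a) ^ 2 / 8) *
            (N ! * exp (θ ^ 2 * (b - a) ^ 2 / 8 * (k * (N - k + 1) / ((N - k) ^ 2 * N)))) :=
          (sum_exp_serflingMartingale_succ_le x hx hk θ).trans
            (mul_le_mul_of_nonneg_left (ih (by omega)) (exp_pos _).le)
      _ = N ! * exp (θ ^ 2 * (b - a) ^ 2 / 8 *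
            (k * (N - k + 1) / ((N - k) ^ 2 * N) + 1 / (N - k - 1) ^ 2)) := by
          rw [mul_left_comm, ← exp_add, div_pow]
          ring_nf
      _ ≤ N ! * exp (θ ^ 2 * (b - a) ^ 2 / 8 *
            ((k + 1 : ℕ) * (N - (k + 1 : ℕ) + 1) / ((N - (k + 1 : ℕ)) ^ 2 * N))) := by
          push_cast
          gcongr
          exact serfling_bound_add_inv_sq_le k.cast_nonneg hk'

theorem card_le_prefixSum_sub_le {a b : ℝ} (hx : ∀ j, x j ∈ Set.Icc a b) {k : ℕ} (hk : k < N)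
    {s : ℝ} (hs : 0 ≤ s) :
    (#{σ | s ≤ prefixSum x σ k - k * (∑ j, x j) / N} : ℝ) ≤
      N ! * exp (-(2 * N * s ^ 2 / ((b - a) ^ 2 * (k * (N - k + 1))))) := by
  have hn : (0 : ℝ) < N - k := by
    have : (k : ℝ) < N := by exact_mod_cast hk
    linarith
  set l := 4 * N * s / ((b - a) ^ 2 * (k * (N - k + 1))) with hl_def
  have hl : 0 ≤ l := by positivity
  have hchernoff := card_filter_le_mul_exp_le_sum univ
    (fun σ => prefixSum x σ k - k * (∑ j, x j) / N) (t := s) hl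
  have hmart : ∀ σ, l * (prefixSum x σ k - k * (∑ j, x j) / N) =
      l * (N - k) * serflingMartingale x σ k := by
    intro σ
    rw [serflingMartingale]
    field_simp
  simp only [hmart] at hchernoff
  have hexponent : (l * (N - k)) ^ 2 * (b - a) ^ 2 / 8 * (k * (N - k + 1) / ((N - k) ^ 2 * N)) =
      -(2 * N * s ^ 2 / ((b - a) ^ 2 * (k * (N - k + 1)))) + l * s := by
    rcases eq_or_ne ((b - a) ^ 2 * (k * (N - k + 1))) 0 with hD | hD
    · simp [hl_def, hD]
    · have hN : (N : ℝ) ≠ 0 := by linarith [(k.cast_nonneg : (0 : ℝ) ≤ k)]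
      rw [hl_def]
      field_simp
      ring
  rw [← le_div_iff₀ (exp_pos _)] at hchernoff
  refine hchernoff.trans ?_
  rw [div_le_iff₀ (exp_pos _), mul_assoc, ← exp_add]
  exact (sum_exp_serflingMartingale_le x hx hk _).trans_eq (by rw [hexponent])

theorem card_prefixSum_sub_le_neg_le {a b : ℝ} (hx : ∀ j, x j ∈ Set.Icc a b) {k : ℕ}
    (hk : k < N) {s : ℝ} (hs : 0 ≤ s) :
    (#{σ | prefixSum x σ k - k * (∑ j, x j) / N ≤ -s} : ℝ) ≤
      N ! * exp (-(2 * N * s ^ 2 / ((b - a) ^ 2 * (k * (N - k + 1))))) := by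
  have hneg := card_le_prefixSum_sub_le (-x) (a := -b) (b := -a)
    (fun j => ⟨neg_le_neg (hx j).2, neg_le_neg (hx j).1⟩) hk hs
  rw [neg_sub_neg] at hneg
  simp only [prefixSum_neg, Pi.neg_apply, sum_neg_distrib, mul_neg, neg_div,
    sub_neg_eq_add] at hneg
  convert hneg using 4
  constructor <;> intro h <;> linarith

-- Read backwards, the draws after position `k` form a sample of size `N - k`.
theorem card_prefixSum_sub_le_neg_le' {a b : ℝ} (hx : ∀ j, x j ∈ Set.Icc a b) {k : ℕ}
    (hk0 : 0 < k) (hk : k ≤ N) {s : ℝ} (hs : 0 ≤ s) :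
    (#{σ | prefixSum x σ k - k * (∑ j, x j) / N ≤ -s} : ℝ) ≤
      N ! * exp (-(2 * N * s ^ 2 / ((b - a) ^ 2 * ((N - k) * (k + 1))))) := by
  have hcompl : #{σ | prefixSum x σ k - k * (∑ j, x j) / N ≤ -s} =
      #{σ | s ≤ prefixSum x σ (N - k) - (N - k : ℕ) * (∑ j, x j) / N} := by
    refine card_equiv (Equiv.mulRight Fin.revPerm) fun σ => ?_
    have hN : (N : ℝ) ≠ 0 := by
      have : 0 < N := by omega
      positivity
    simp only [mem_filter, mem_univ, true_and, coe_mulRight, prefixSum_mul_revPerm x σ hk,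
      Nat.cast_sub hk]
    constructor <;> intro h <;> field_simp at h ⊢ <;> linarith
  rw [hcompl]
  refine (card_le_prefixSum_sub_le x hx (Nat.sub_lt (by omega) hk0) hs).trans_eq ?_
  rw [Nat.cast_sub hk]
  ring_nf

end Sampling

theorem exp_neg_le_of_mul_le {N m u δ ε a b D : ℝ} (hab : a < b) (hε : 0 < ε) (hδ : 0 < δ)
    (hu : u = log (1 / δ) / 2 * ((b - a) ^ 2 / ε ^ 2)) (hD : 0 < D) (h : u * D ≤ N * m ^ 2) :
    exp (-(2 * N * (m * ε) ^ 2 / ((b - a) ^ 2 * D))) ≤ δ := by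
  have hba : 0 < (b - a) ^ 2 := by nlinarith
  have hba' : b - a ≠ 0 := by linarith
  have hlog : log δ = -(2 * u * ε ^ 2 / (b - a) ^ 2) := by
    rw [hu, one_div, log_inv]
    field_simp
  rw [← le_log_iff_exp_le hδ, hlog, neg_le_neg_iff, div_le_div_iff₀ hba (by positivity)]
  nlinarith [mul_le_mul_of_nonneg_left h (by positivity : 0 ≤ 2 * ε ^ 2 * (b - a) ^ 2)]

theorem serfling_sample_size_cases {N m u : ℝ} (hN : 0 < N) (hu : 0 ≤ u) (hm : 0 ≤ m)
    (h : min ((u + 1) / (1 + u / N)) ((u + u / N) / (1 + u / N)) ≤ m) :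
    u * (m * (N - m + 1)) ≤ N * m ^ 2 ∨ u * ((N - m) * (m + 1)) ≤ N * m ^ 2 := by
  have hd : 0 < 1 + u / N := by positivity
  rcases min_le_iff.1 h with h | h <;> rw [div_le_iff₀ hd] at h <;>
    have h := mul_le_mul_of_nonneg_right h hN.le <;> field_simp at h
  · right
    nlinarith
  · left
    nlinarith

theorem stmt3_general (N : ℕ) (a b : ℝ) (hab : a < b)
    (x : Fin N → ℝ) (hx : ∀ j, a ≤ x j ∧ x j ≤ b)
    (ε δ : ℝ) (hε0 : 0 < ε) (hδ0 : 0 < δ) (hδ1 : δ < 1)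
    (u : ℝ) (hu : u = Real.log (1 / δ) / 2 * ((b - a) ^ 2 / ε ^ 2))
    (m : ℕ) (hm1 : 1 ≤ m) (hmN : m ≤ N)
    (hm : min ((u + 1) / (1 + u / (N : ℝ))) ((u + u / (N : ℝ)) / (1 + u / (N : ℝ))) ≤ (m : ℝ)) :
    1 - δ ≤
      (Nat.card {σ : Equiv.Perm (Fin N) //
          -ε ≤ (1 / (m : ℝ)) * (∑ t ∈ Finset.univ.filter (fun t : Fin N => (t : ℕ) < m), x (σ t))
              - (1 / (N : ℝ)) * ∑ j, x j} : ℝ)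
        / (Nat.card (Equiv.Perm (Fin N)) : ℝ) := by
  refine one_sub_le_card_subtype_div _ ?_
  rw [Fintype.card_perm, Fintype.card_fin]
  have hm0 : (0 : ℝ) < m := by exact_mod_cast hm1
  rcases hmN.lt_or_eq with hmN | rfl
  · have hmN' : (m : ℝ) < N := by exact_mod_cast hmN
    have hbad : ∀ σ ∈ univ, ¬-ε ≤ 1 / (m : ℝ) * prefixSum x σ m - 1 / (N : ℝ) * ∑ j, x j →
        prefixSum x σ m - m * (∑ j, x j) / N ≤ -(m * ε) := fun σ _ hσ => by
      rw [not_le, ← mul_lt_mul_iff_of_pos_left hm0] at hσ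
      field_simp at hσ ⊢
      linarith
    refine (Nat.cast_le.2 (card_le_card (monotone_filter_right _ hbad))).trans ?_
    have hu0 : 0 ≤ u := hu ▸ by have := log_nonneg (one_le_one_div hδ0 hδ1.le); positivity
    rcases serfling_sample_size_cases (by linarith) hu0 hm0.le hm with h | h
    · refine (card_prefixSum_sub_le_neg_le x hx hmN (by positivity)).trans ?_
      gcongr
      exact exp_neg_le_of_mul_le hab hε0 hδ0 hu (by nlinarith) h
    · refine (card_prefixSum_sub_le_neg_le' x hx hm1 hmN.le (by positivity)).trans ?_
      gcongr
      exact exp_neg_le_of_mul_le hab hε0 hδ0 hu (by nlinarith) h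
  · have hgood : ∀ σ, -ε ≤ 1 / (m : ℝ) * prefixSum x σ m - 1 / (m : ℝ) * ∑ j, x j := by
      intro σ
      rw [prefixSum_self, sub_self]
      exact neg_nonpos.2 hε0.le
    calc _ = (0 : ℝ) := by
          norm_cast
          exact card_eq_zero.2 (filter_eq_empty_iff.2 fun σ _ => not_not.2 (hgood σ))
      _ ≤ m ! * δ := by positivity

/-- Lower-tail sample-size version: under the same sample-size condition,
`X̄_m − μ ≥ −ε` with probability at least `1 − δ`. -/
theorem stmt3 (N : ℕ) (hN : 1 < N) (a b : ℝ) (hab : a < b)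
    (x : Fin N → ℝ) (hx : ∀ j, a ≤ x j ∧ x j ≤ b)
    (ε δ : ℝ) (hε0 : 0 < ε) (hε1 : ε < 1) (hδ0 : 0 < δ) (hδ1 : δ < 1)
    (u : ℝ) (hu : u = Real.log (1 / δ) / 2 * ((b - a) ^ 2 / ε ^ 2))
    (m : ℕ) (hm1 : 1 ≤ m) (hmN : m ≤ N)
    (hm : min ((u + 1) / (1 + u / (N : ℝ))) ((u + u / (N : ℝ)) / (1 + u / (N : ℝ))) ≤ (m : ℝ)) :
    1 - δ ≤
      (Nat.card {σ : Equiv.Perm (Fin N) //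
          -ε ≤ (1 / (m : ℝ)) * (∑ t ∈ Finset.univ.filter (fun t : Fin N => (t : ℕ) < m), x (σ t))
              - (1 / (N : ℝ)) * ∑ j, x j} : ℝ)
        / (Nat.card (Equiv.Perm (Fin N)) : ℝ) :=
  stmt3_general N a b hab x hx ε δ hε0 hδ0 hδ1 u hu m hm1 hmN hm
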